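/- arXiv:1308.6175 — 2 statements merged into one kernel-verified Lean document; each statement's English description precedes it below -/
import Mathlib

section
/- Let C_0 ⊆ C_1 ⊆ ... ⊆ C_{a-1} ⊆ C_a = (ZMod 2)^n be a family of nested binary linear codes that is closed under Schur product. If b_1, ..., b_n and b'_1, ..., b'_n are two bases of (ZMod 2)^n such that b_1, ..., b_{k_i} span C_i and b'_1, ..., b'_{k_i} span C_i for each i, then the corresponding Construction D sets are equal: Λ_D(b) = Λ_D(b'). That is, under the Schur-product closure hypothesis the lattice from Construction D is independent of the chosen basis. -/
/-!
Under Schur closure, Construction D agrees with the code formula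
`Λ_C = ψ(C_0) + 2 ψ(C_1) + ⋯ + 2^(a-1) ψ(C_(a-1)) + 2^a ℤ^n`, which does not mention a basis.
The key identity is `ψ(c) + ψ(d) = ψ(c + d) + 2 ψ(c ∗ d)`: adding two words of `C_i` in `ℤ^n`
produces a carry in `2 ψ(C_(i+1))`, so Schur closure makes the code formula an additive group.
Conversely, writing `c ∈ C_i` as a sum of basis vectors `b_j` with `j < k_i`, the same carries
show that `ψ(c)` differs from an admissible `i`-th digit of `Λ_D(b)` by twice an element of the
next layer, and induction on the number of layers gives `Λ_D(b) = Λ_C`.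
-/

noncomputable section

/-- The natural embedding of `(ZMod 2)^n` into `ℤ^n`, applying coordinatewise the map
sending `0` to `0` and `1` to `1`. -/
def psi {n : ℕ} (x : Fin n → ZMod 2) : Fin n → ℤ := fun k => ((x k).val : ℤ)

/-- The basis `b` of `(ZMod 2)^n` is such that its first `k_i = dim C_i` vectors
`b_1, ..., b_{k_i}` span `C_i`, for each `i < a`. -/
def SpansChain {n : ℕ} (a : ℕ) (C : ℕ → Submodule (ZMod 2) (Fin n → ZMod 2))
    (b : Module.Basis (Fin n) (ZMod 2) (Fin n → ZMod 2)) : Prop :=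
  ∀ i < a, Submodule.span (ZMod 2)
      ((fun j => b j) '' {j : Fin n | (j : ℕ) < Module.finrank (ZMod 2) (C i)}) = C i

/-- The Construction D set `Λ_D` associated to a chain of codes `C` and a basis `b`:
all vectors `Σ_{i<a} 2^i Σ_{j ≤ k_i} α_j^{(i)} ψ(b_j) + 2^a l` with `α_j^{(i)} ∈ {0,1}`,
`l ∈ ℤ^n`, and `k_i = dim C_i`. -/
def LambdaD {n : ℕ} (a : ℕ) (C : ℕ → Submodule (ZMod 2) (Fin n → ZMod 2))
    (b : Module.Basis (Fin n) (ZMod 2) (Fin n → ZMod 2)) : Set (Fin n → ℤ) :=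
  { x | ∃ (α : ℕ → Fin n → ℤ) (l : Fin n → ℤ),
      (∀ i j, α i j = 0 ∨ α i j = 1) ∧
      x = (∑ i ∈ Finset.range a, (2 ^ i : ℤ) •
            ∑ j ∈ Finset.univ.filter
                (fun j : Fin n => (j : ℕ) < Module.finrank (ZMod 2) (C i)),
              α i j • psi (b j)) + (2 ^ a : ℤ) • l }

open Finset

section RadixSet

variable {M : Type*} [AddCommGroup M]

def radixSet (S : ℕ → Set M) : ℕ → ℕ → Set M
  | _, 0 => Set.univ
  | i, r + 1 => {x | ∃ d ∈ S i, ∃ y ∈ radixSet S (i + 1) r, x = d + (2 : ℤ) • y}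

theorem mem_radixSet_iff {S : ℕ → Set M} {i r : ℕ} {x : M} :
    x ∈ radixSet S i r ↔ ∃ d : ℕ → M, (∀ m < r, d m ∈ S (i + m)) ∧
      ∃ l, x = ∑ m ∈ range r, (2 ^ m : ℤ) • d m + (2 ^ r : ℤ) • l := by
  induction r generalizing i x with
  | zero => simp [radixSet]
  | succ r ih =>
    simp only [radixSet, Set.mem_ofPred_eq, ih]
    constructor
    · rintro ⟨d₀, hd₀, y, ⟨d, hd, l, rfl⟩, rfl⟩
      refine ⟨fun m => if m = 0 then d₀ else d (m - 1), fun m hm => ?_, l, ?_⟩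
      · rcases m with _ | m
        · simpa using hd₀
        · simpa [show i + (m + 1) = i + 1 + m by omega] using hd m (by omega)
      · simp [sum_range_succ', smul_add, smul_sum, smul_smul, pow_succ']
        abel
    · rintro ⟨d, hd, l, rfl⟩
      refine ⟨d 0, hd 0 (by omega), _, ⟨fun m => d (m + 1), fun m hm => ?_, l, rfl⟩, ?_⟩
      · simpa [show i + 1 + m = i + (m + 1) by omega] using hd (m + 1) (by omega)
      · simp [sum_range_succ', smul_add, smul_sum, smul_smul, pow_succ']
        abel

end RadixSet

theorem psi_zero {n : ℕ} : psi (0 : Fin n → ZMod 2) = 0 := by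
  funext k; simp [psi]

theorem psi_add_psi {n : ℕ} (c d : Fin n → ZMod 2) :
    psi c + psi d = psi (c + d) + (2 : ℤ) • psi (c * d) := by
  funext k
  have key : ∀ x y : ZMod 2,
      (x.val : ℤ) + y.val = ((x + y).val : ℤ) + 2 * ((x * y).val : ℤ) := by decide
  simpa [psi] using key (c k) (d k)

theorem Module.Basis.exists_finset_sum_eq_of_mem_span {ι M : Type*} [AddCommGroup M]
    [Module (ZMod 2) M] (b : Module.Basis ι (ZMod 2) M) {s : Set ι} {c : M}
    (hc : c ∈ Submodule.span (ZMod 2) (b '' s)) : ∃ T : Finset ι, ↑T ⊆ s ∧ ∑ j ∈ T, b j = c := by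
  refine ⟨(b.repr c).support, b.mem_span_image.1 hc, ?_⟩
  conv_rhs => rw [← b.linearCombination_repr c, Finsupp.linearCombination_apply, Finsupp.sum]
  refine sum_congr rfl fun j hj => ?_
  have hne_zero : ∀ x : ZMod 2, x ≠ 0 → x = 1 := by decide
  rw [hne_zero _ (Finsupp.mem_support_iff.1 hj), one_smul]

section CodeFormula

variable {n : ℕ}

def IsSchurClosed (C : ℕ → Submodule (ZMod 2) (Fin n → ZMod 2)) (N : ℕ) : Prop :=
  ∀ i < N, ∀ c ∈ C i, ∀ d ∈ C i, c * d ∈ C (i + 1)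

/-- Over `ZMod 2` every word is idempotent for the Schur product, `c * c = c`. -/
theorem IsSchurClosed.mem_succ {C : ℕ → Submodule (ZMod 2) (Fin n → ZMod 2)} {N i : ℕ}
    (hC : IsSchurClosed C N) (hi : i < N) {c : Fin n → ZMod 2} (hc : c ∈ C i) :
    c ∈ C (i + 1) := by
  have hcc : c * c = c := funext fun k => by
    have key : ∀ x : ZMod 2, x * x = x := by decide
    exact key (c k)
  simpa [hcc] using hC i hi c hc c hc

/-- The code formula `Λ_C = ψ(C_i) + 2 ψ(C_(i+1)) + ⋯ + 2^(r-1) ψ(C_(i+r-1)) + 2^r ℤ^n`. -/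
def codeFormula (C : ℕ → Submodule (ZMod 2) (Fin n → ZMod 2)) : ℕ → ℕ → Set (Fin n → ℤ) :=
  radixSet fun i => psi '' C i

variable {C : ℕ → Submodule (ZMod 2) (Fin n → ZMod 2)} {N i r : ℕ}

theorem mem_codeFormula_succ {x : Fin n → ℤ} :
    x ∈ codeFormula C i (r + 1) ↔
      ∃ c ∈ C i, ∃ y ∈ codeFormula C (i + 1) r, x = psi c + (2 : ℤ) • y := by
  simp [codeFormula, radixSet]

theorem zero_mem_codeFormula (i r : ℕ) : (0 : Fin n → ℤ) ∈ codeFormula C i r := by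
  induction r generalizing i with
  | zero => trivial
  | succ r ih => exact mem_codeFormula_succ.2 ⟨0, zero_mem _, 0, ih _, by simp [psi_zero]⟩

theorem psi_mem_codeFormula {c : Fin n → ZMod 2} (hc : c ∈ C i) (r : ℕ) :
    psi c ∈ codeFormula C i r := by
  cases r with
  | zero => trivial
  | succ r => exact mem_codeFormula_succ.2 ⟨c, hc, 0, zero_mem_codeFormula _ _, by simp⟩


theorem two_smul_mem_codeFormula {y : Fin n → ℤ} (hy : y ∈ codeFormula C (i + 1) r) :
    (2 : ℤ) • y ∈ codeFormula C i (r + 1) :=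
  mem_codeFormula_succ.2 ⟨0, zero_mem _, y, hy, by simp [psi_zero]⟩

theorem add_mem_codeFormula (hC : IsSchurClosed C N) (hir : i + r ≤ N) {x y : Fin n → ℤ}
    (hx : x ∈ codeFormula C i r) (hy : y ∈ codeFormula C i r) : x + y ∈ codeFormula C i r := by
  induction r generalizing i x y with
  | zero => trivial
  | succ r ih =>
    obtain ⟨c, hc, u, hu, rfl⟩ := mem_codeFormula_succ.1 hx
    obtain ⟨d, hd, v, hv, rfl⟩ := mem_codeFormula_succ.1 hy
    have hcd := psi_mem_codeFormula (hC i (by omega) c hc d hd) r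
    refine mem_codeFormula_succ.2 ⟨c + d, add_mem hc hd, psi (c * d) + (u + v),
      ih (by omega) hcd (ih (by omega) hu hv), ?_⟩
    linear_combination (norm := module) psi_add_psi c d

theorem neg_mem_codeFormula (hC : IsSchurClosed C N) (hir : i + r ≤ N) {x : Fin n → ℤ}
    (hx : x ∈ codeFormula C i r) : -x ∈ codeFormula C i r := by
  induction r generalizing i x with
  | zero => trivial
  | succ r ih =>
    obtain ⟨c, hc, y, hy, rfl⟩ := mem_codeFormula_succ.1 hx
    have hc' := psi_mem_codeFormula (hC.mem_succ (by omega) hc) r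
    refine mem_codeFormula_succ.2 ⟨c, hc, -(psi c + y),
      ih (by omega) (add_mem_codeFormula hC (by omega) hc' hy), ?_⟩
    rw [smul_neg, smul_add, two_smul]
    abel

def codeFormulaAddSubgroup (hC : IsSchurClosed C N) (hir : i + r ≤ N) :
    AddSubgroup (Fin n → ℤ) where
  carrier := codeFormula C i r
  zero_mem' := zero_mem_codeFormula i r
  add_mem' := add_mem_codeFormula hC hir
  neg_mem' := neg_mem_codeFormula hC hir

theorem exists_sum_psi_eq_psi_sum_add (hC : IsSchurClosed C N) (hir : i + 1 + r ≤ N)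
    {ι : Type*} (T : Finset ι) {f : ι → Fin n → ZMod 2} (hf : ∀ j ∈ T, f j ∈ C i) :
    ∃ w ∈ codeFormula C (i + 1) r, ∑ j ∈ T, psi (f j) = psi (∑ j ∈ T, f j) + (2 : ℤ) • w := by
  classical
  induction T using Finset.induction_on with
  | empty => exact ⟨0, zero_mem_codeFormula _ _, by simp [psi_zero]⟩
  | @insert j T hj ih =>
    obtain ⟨w, hw, hsum⟩ := ih fun k hk => hf k (mem_insert_of_mem hk)
    have hfj : f j ∈ C i := hf j (mem_insert_self j T)
    have hfT : ∑ k ∈ T, f k ∈ C i := sum_mem fun k hk => hf k (mem_insert_of_mem hk)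
    have hcarry := psi_mem_codeFormula (hC i (by omega) _ hfj _ hfT) r
    refine ⟨psi (f j * ∑ k ∈ T, f k) + w, add_mem_codeFormula hC hir hcarry hw, ?_⟩
    rw [sum_insert hj, sum_insert hj, hsum]
    linear_combination (norm := module) psi_add_psi (f j) (∑ k ∈ T, f k)

end CodeFormula

section BasisDigits

variable {n : ℕ} {C : ℕ → Submodule (ZMod 2) (Fin n → ZMod 2)}
  {b : Module.Basis (Fin n) (ZMod 2) (Fin n → ZMod 2)}

/-- The `i`-th digits `Σ_{j ≤ k_i} α_j ψ(b_j)`, `α_j ∈ {0,1}`, of Construction D, indexed by the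
support `T` of `α`. -/
def basisDigits (C : ℕ → Submodule (ZMod 2) (Fin n → ZMod 2))
    (b : Module.Basis (Fin n) (ZMod 2) (Fin n → ZMod 2)) (i : ℕ) : Set (Fin n → ℤ) :=
  {d | ∃ T ⊆ univ.filter (fun j : Fin n => (j : ℕ) < Module.finrank (ZMod 2) (C i)),
    d = ∑ j ∈ T, psi (b j)}

theorem lambdaD_eq_radixSet (a : ℕ) : LambdaD a C b = radixSet (basisDigits C b) 0 a := by
  ext x
  simp only [LambdaD, mem_radixSet_iff, zero_add, Set.mem_ofPred_eq]
  constructor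
  · rintro ⟨α, l, hα, rfl⟩
    refine ⟨_, fun m _ => ⟨_, filter_subset (fun j => α m j = 1) _, ?_⟩, l, rfl⟩
    rw [sum_filter (fun j => α m j = 1)]
    refine sum_congr rfl fun j _ => ?_
    rcases hα m j with h | h <;> simp [h]
  · rintro ⟨d, hd, l, rfl⟩
    choose! T hT hdT using hd
    refine ⟨fun m j => if j ∈ T m then 1 else 0, l, fun m j => by by_cases h : j ∈ T m <;> simp [h], ?_⟩
    congr 1
    refine sum_congr rfl fun m hm => ?_
    rw [hdT m (mem_range.1 hm)]
    simp only [ite_smul, one_smul, zero_smul]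
    rw [sum_ite_mem, inter_eq_right.2 (hT m (mem_range.1 hm))]

theorem basisDigits_subset_codeFormula {N i r : ℕ} (hC : IsSchurClosed C N) (hir : i + r ≤ N)
    (hbi : Submodule.span (ZMod 2)
      ((fun j => b j) '' {j : Fin n | (j : ℕ) < Module.finrank (ZMod 2) (C i)}) = C i) :
    basisDigits C b i ⊆ codeFormula C i r := by
  rintro _ ⟨T, hT, rfl⟩
  refine (codeFormulaAddSubgroup hC hir).sum_mem fun j hj => psi_mem_codeFormula ?_ r
  rw [← hbi]
  exact Submodule.subset_span ⟨j, (mem_filter.1 (hT hj)).2, rfl⟩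

theorem radixSet_basisDigits_eq_codeFormula {N : ℕ} (hC : IsSchurClosed C N)
    (hb : SpansChain N C b) {i r : ℕ} (hir : i + r ≤ N) :
    radixSet (basisDigits C b) i r = codeFormula C i r := by
  induction r generalizing i with
  | zero => rfl
  | succ r ih =>
    have hbi := hb i (by omega)
    ext x
    constructor
    · rintro ⟨d, hd, y, hy, rfl⟩
      rw [ih (by omega)] at hy
      exact add_mem_codeFormula hC hir (basisDigits_subset_codeFormula hC hir hbi hd)
        (two_smul_mem_codeFormula hy)
    · intro hx
      obtain ⟨c, hc, y, hy, rfl⟩ := mem_codeFormula_succ.1 hx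
      obtain ⟨T, hT, rfl⟩ := b.exists_finset_sum_eq_of_mem_span (hbi ▸ hc)
      obtain ⟨w, hw, hcarry⟩ := exists_sum_psi_eq_psi_sum_add (r := r) hC (by omega) T
        fun j hj => hbi ▸ Submodule.subset_span (Set.mem_image_of_mem _ (hT hj))
      refine ⟨_, ⟨T, fun j hj => mem_filter.2 ⟨mem_univ j, hT hj⟩, rfl⟩, y - w, ?_, ?_⟩
      · rw [ih (by omega)]
        exact (codeFormulaAddSubgroup hC (by omega)).sub_mem hy hw
      · rw [hcarry]
        module

theorem lambdaD_eq_codeFormula {a : ℕ} (hC : IsSchurClosed C a) (hb : SpansChain a C b) :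
    LambdaD a C b = codeFormula C 0 a := by
  rw [lambdaD_eq_radixSet, radixSet_basisDigits_eq_codeFormula hC hb (zero_add a).le]

end BasisDigits

theorem lambdaD_basis_independent_general {n a : ℕ}
    (C : ℕ → Submodule (ZMod 2) (Fin n → ZMod 2))
    (hschur : ∀ i < a, ∀ c ∈ C i, ∀ d ∈ C i, c * d ∈ C (i + 1))
    (b b' : Module.Basis (Fin n) (ZMod 2) (Fin n → ZMod 2))
    (hb : SpansChain a C b) (hb' : SpansChain a C b') :
    LambdaD a C b = LambdaD a C b' :=
  (lambdaD_eq_codeFormula hschur hb).trans (lambdaD_eq_codeFormula hschur hb').symm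

/-- If the chain of nested binary linear codes is closed under Schur
product, then the Construction D set is independent of the chosen basis: for any two
bases `b, b'` of `(ZMod 2)^n` whose first `k_i` vectors span `C_i`,
`Λ_D(b) = Λ_D(b')`. -/
theorem lambdaD_basis_independent {n a : ℕ}
    (C : ℕ → Submodule (ZMod 2) (Fin n → ZMod 2))
    (hmono : ∀ i < a, C i ≤ C (i + 1)) (htop : C a = ⊤)
    (hschur : ∀ i < a, ∀ c ∈ C i, ∀ d ∈ C i, c * d ∈ C (i + 1))
    (b b' : Module.Basis (Fin n) (ZMod 2) (Fin n → ZMod 2))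
    (hb : SpansChain a C b) (hb' : SpansChain a C b') :
    LambdaD a C b = LambdaD a C b' :=
  lambdaD_basis_independent_general C hschur b b' hb hb'
end
end

section
/- Let C be a linear code over 𝒰_a of length n that can be expressed as C = C_0 + u·C_1 + ... + u^{a-1}·C_{a-1} for binary codes C_0 ⊆ C_1 ⊆ ... ⊆ C_{a-1} ⊆ (ZMod 2)^n that are closed under Schur product (i.e., C = { Σ_{i=0}^{a-1} c_i u^i | c_i ∈ C_i }, and c ∗ d ∈ C_{i+1} for all c, d ∈ C_i, with C_a := (ZMod 2)^n). Then Γ_A' := Φ(C) + 2^a ℤ^n = { Φ(c) + 2^a l | c ∈ C, l ∈ ℤ^n } is an additive subgroup of ℤ^n, i.e., a lattice. -/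
noncomputable section

set_option synthInstance.maxHeartbeats 400000

/-- The quotient ring `𝒰_a = 𝔽₂[u]/u^a`. -/
abbrev Ua (a : ℕ) : Type :=
  Polynomial (ZMod 2) ⧸ Ideal.span {(Polynomial.X : Polynomial (ZMod 2)) ^ a}

/-- The image `u` of the variable `X` in `𝒰_a`. -/
noncomputable def uU (a : ℕ) : Ua a := Ideal.Quotient.mk _ Polynomial.X

/-- The canonical representative (of degree `< a`) of an element of `𝒰_a`. -/
noncomputable def uaRep {a : ℕ} (x : Ua a) : Polynomial (ZMod 2) :=
  Function.surjInv
    (Ideal.Quotient.mk_surjective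
      (I := Ideal.span {(Polynomial.X : Polynomial (ZMod 2)) ^ a})) x
    %ₘ (Polynomial.X ^ a)

/-- The coefficient `b_j` of `u^j` in `x = Σ_{j<a} b_j u^j ∈ 𝒰_a`. -/
noncomputable def uaCoeff {a : ℕ} (x : Ua a) (j : ℕ) : ZMod 2 := (uaRep x).coeff j

/-- The map `Φ : 𝒰_a → ℤ` sending `Σ_{j<a} b_j u^j` to `Σ_{j<a} ψ(b_j) 2^j`. -/
noncomputable def PhiU {a : ℕ} (x : Ua a) : ℤ :=
  ∑ j ∈ Finset.range a, ((uaCoeff x j).val : ℤ) * 2 ^ j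

/-- `Φ` extended componentwise to a map `(Fin n → 𝒰_a) → (Fin n → ℤ)`. -/
noncomputable def PhiV {n a : ℕ} (c : Fin n → Ua a) : Fin n → ℤ := fun k => PhiU (c k)

/-- The Construction A' set `Γ_{A'} = Φ(C) + 2^a ℤ^n` of a code `C ⊆ (Fin n → 𝒰_a)`. -/
def GammaA' {n a : ℕ} (C : Set (Fin n → Ua a)) : Set (Fin n → ℤ) :=
  { x | ∃ c ∈ C, ∃ l : Fin n → ℤ, x = PhiV c + (2 ^ a : ℤ) • l }

/-- The code `C = C₀ + u C₁ + ... + u^{a-1} C_{a-1}` over `𝒰_a` associated to a chain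
of binary codes: all vectors `Σ_{i<a} c_i u^i` with `c_i ∈ C_i`. -/
noncomputable def CodeSet {n : ℕ} (a : ℕ) (C : ℕ → Submodule (ZMod 2) (Fin n → ZMod 2)) :
    Set (Fin n → Ua a) :=
  { x | ∃ c : ℕ → Fin n → ZMod 2,
      (∀ i < a, c i ∈ C i) ∧
      x = fun k => Ideal.Quotient.mk _
        (∑ i ∈ Finset.range a, Polynomial.C (c i k) * Polynomial.X ^ i) }

/-! Writing `Φ(Σ cᵢ uⁱ)` coordinatewise as the binary number with digits `cᵢ`, the sum
`Φ(c) + Φ(d)` is computed by ripple-carry addition: its digits are `cᵢ + dᵢ + rᵢ`, where the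
carry `r_{i+1} = cᵢdᵢ + cᵢrᵢ + dᵢrᵢ` (the majority of three bits) lies in `C_{i+1}` by Schur
closure, and the carry out of the top digit is a multiple of `2^a`. So `Γ_{A'}` is closed under
addition; it contains `2^a ℤ^n`, hence also `-x = (2^a - 1) x + 2^a (-x)` for each of its `x`. -/

open Polynomial

theorem Polynomial.coeff_modByMonic_X_pow_of_lt {R : Type*} [Ring R] (p : R[X]) {a j : ℕ}
    (hj : j < a) : (p %ₘ X ^ a).coeff j = p.coeff j := by
  conv_rhs => rw [← modByMonic_add_div p (X ^ a)]
  rw [coeff_add, coeff_X_pow_mul', if_neg (by omega), add_zero]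

theorem AddSubmonoid.neg_mem_of_nsmul_mem {G : Type*} [AddCommGroup G] (S : AddSubmonoid G)
    {N : ℕ} (hN : 0 < N) (hS : ∀ y, N • y ∈ S) {x : G} (hx : x ∈ S) : -x ∈ S := by
  obtain ⟨k, rfl⟩ := Nat.exists_eq_add_one.mpr hN
  have hneg : -x = k • x + (k + 1) • -x := by
    rw [succ_nsmul, smul_neg]
    abel
  rw [hneg]
  exact add_mem (nsmul_mem hx k) (hS (-x))

lemma uaRep_mk {a : ℕ} (p : (ZMod 2)[X]) :
    uaRep (Ideal.Quotient.mk (Ideal.span {(X : (ZMod 2)[X]) ^ a}) p) = p %ₘ X ^ a :=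
  modByMonic_eq_of_dvd_sub (monic_X_pow a) <|
    Ideal.mem_span_singleton.mp <| Ideal.Quotient.eq.mp (Function.surjInv_eq _ _)

lemma uaCoeff_mk {a j : ℕ} (p : (ZMod 2)[X]) (hj : j < a) :
    uaCoeff (Ideal.Quotient.mk (Ideal.span {(X : (ZMod 2)[X]) ^ a}) p) j = p.coeff j := by
  rw [uaCoeff, uaRep_mk, coeff_modByMonic_X_pow_of_lt p hj]

def binaryValue (m : ℕ) (b : ℕ → ZMod 2) : ℤ :=
  ∑ i ∈ Finset.range m, ((b i).val : ℤ) * 2 ^ i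

def sumLayers {n : ℕ} (a : ℕ) (c : ℕ → Fin n → ZMod 2) : Fin n → Ua a :=
  fun k => Ideal.Quotient.mk _ (∑ i ∈ Finset.range a, C (c i k) * X ^ i)

lemma PhiV_sumLayers {n a : ℕ} (c : ℕ → Fin n → ZMod 2) :
    PhiV (sumLayers a c) = fun k => binaryValue a (c · k) := by
  funext k
  simp only [PhiV, PhiU, binaryValue]
  refine Finset.sum_congr rfl fun j hj => ?_
  rw [sumLayers, uaCoeff_mk _ (Finset.mem_range.mp hj), finsetSum_coeff]
  simp [Finset.mem_range.mp hj]

section Carry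

variable {R : Type*} [NonUnitalNonAssocSemiring R]

def carry (c d : ℕ → R) : ℕ → R
  | 0 => 0
  | i + 1 => c i * d i + c i * carry c d i + d i * carry c d i

def sumBit (c d : ℕ → R) (i : ℕ) : R := c i + d i + carry c d i

variable {σ : Type*} [SetLike σ R] [AddSubmonoidClass σ R] {a : ℕ} {C : ℕ → σ}
  {c d : ℕ → R}

lemma carry_mem (hschur : ∀ i < a, ∀ x ∈ C i, ∀ y ∈ C i, x * y ∈ C (i + 1))
    (hc : ∀ i < a, c i ∈ C i) (hd : ∀ i < a, d i ∈ C i) : ∀ i ≤ a, carry c d i ∈ C i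
  | 0, _ => zero_mem _
  | i + 1, hi => by
    have hr := carry_mem hschur hc hd i (Nat.le_of_succ_le hi)
    exact add_mem (add_mem (hschur i hi _ (hc i hi) _ (hd i hi))
      (hschur i hi _ (hc i hi) _ hr)) (hschur i hi _ (hd i hi) _ hr)

lemma sumBit_mem (hschur : ∀ i < a, ∀ x ∈ C i, ∀ y ∈ C i, x * y ∈ C (i + 1))
    (hc : ∀ i < a, c i ∈ C i) (hd : ∀ i < a, d i ∈ C i) {i : ℕ} (hi : i < a) :
    sumBit c d i ∈ C i :=
  add_mem (add_mem (hc i hi) (hd i hi)) (carry_mem hschur hc hd i hi.le)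

end Carry

lemma carry_apply {ι R : Type*} [NonUnitalNonAssocSemiring R] (c d : ℕ → ι → R) (k : ι)
    (i : ℕ) : carry c d i k = carry (c · k) (d · k) i := by
  induction i with
  | zero => rfl
  | succ i ih => simp only [carry, Pi.add_apply, Pi.mul_apply, ih]

lemma sumBit_apply {ι R : Type*} [NonUnitalNonAssocSemiring R] (c d : ℕ → ι → R) (k : ι)
    (i : ℕ) : sumBit c d i k = sumBit (c · k) (d · k) i := by
  simp only [sumBit, Pi.add_apply, carry_apply]

lemma ZMod.val_add_val_add_val_two (x y z : ZMod 2) :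
    x.val + y.val + z.val = (x + y + z).val + 2 * (x * y + x * z + y * z).val := by
  decide +revert

theorem binaryValue_add_binaryValue (b b' : ℕ → ZMod 2) (m : ℕ) :
    binaryValue m b + binaryValue m b' =
      binaryValue m (sumBit b b') + 2 ^ m * (carry b b' m).val := by
  induction m with
  | zero => simp [binaryValue, carry]
  | succ m ih =>
    have hbit : ((b m).val : ℤ) + (b' m).val + (carry b b' m).val =
        (sumBit b b' m).val + 2 * (carry b b' (m + 1)).val := by
      exact_mod_cast ZMod.val_add_val_add_val_two (b m) (b' m) (carry b b' m)
    simp only [binaryValue, Finset.sum_range_succ] at ih ⊢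
    linear_combination ih + 2 ^ m * hbit

section Gamma

variable {n a : ℕ} {C : ℕ → Submodule (ZMod 2) (Fin n → ZMod 2)}

lemma mem_gammaA'_codeSet {x : Fin n → ℤ} :
    x ∈ GammaA' (CodeSet a C) ↔ ∃ c : ℕ → Fin n → ZMod 2, (∀ i < a, c i ∈ C i) ∧
      ∃ l : Fin n → ℤ, x = (fun k => binaryValue a (c · k)) + (2 ^ a : ℤ) • l := by
  constructor
  · rintro ⟨_, ⟨c, hc, rfl⟩, l, rfl⟩
    exact ⟨c, hc, l, by rw [← PhiV_sumLayers]; rfl⟩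
  · rintro ⟨c, hc, l, rfl⟩
    exact ⟨sumLayers a c, ⟨c, hc, rfl⟩, l, by rw [PhiV_sumLayers]⟩

lemma zsmul_mem_gammaA'_codeSet (l : Fin n → ℤ) :
    (2 ^ a : ℤ) • l ∈ GammaA' (CodeSet a C) :=
  mem_gammaA'_codeSet.mpr ⟨0, fun i _ => zero_mem (C i), l, by ext; simp [binaryValue]⟩

lemma add_mem_gammaA'_codeSet (hschur : ∀ i < a, ∀ c ∈ C i, ∀ d ∈ C i, c * d ∈ C (i + 1))
    {x y : Fin n → ℤ} (hx : x ∈ GammaA' (CodeSet a C)) (hy : y ∈ GammaA' (CodeSet a C)) :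
    x + y ∈ GammaA' (CodeSet a C) := by
  obtain ⟨c, hc, l, rfl⟩ := mem_gammaA'_codeSet.mp hx
  obtain ⟨d, hd, l', rfl⟩ := mem_gammaA'_codeSet.mp hy
  refine mem_gammaA'_codeSet.mpr ⟨sumBit c d, fun i hi => sumBit_mem hschur hc hd hi,
    (fun k => ((carry c d a k).val : ℤ)) + l + l', funext fun k => ?_⟩
  have := binaryValue_add_binaryValue (c · k) (d · k) a
  simp only [Pi.add_apply, Pi.smul_apply, smul_eq_mul, sumBit_apply, carry_apply]
  linear_combination this

end Gamma

theorem gammaA'_lattice_of_schur_general {n a : ℕ} (M : Submodule (Ua a) (Fin n → Ua a))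
    (C : ℕ → Submodule (ZMod 2) (Fin n → ZMod 2))
    (hschur : ∀ i < a, ∀ c ∈ C i, ∀ d ∈ C i, c * d ∈ C (i + 1))
    (hexpr : (M : Set (Fin n → Ua a)) = CodeSet a C) :
    ∃ G : AddSubgroup (Fin n → ℤ),
      (G : Set (Fin n → ℤ)) = GammaA' (M : Set (Fin n → Ua a)) := by
  let S : AddSubmonoid (Fin n → ℤ) :=
    { carrier := GammaA' (CodeSet a C)
      add_mem' := add_mem_gammaA'_codeSet hschur
      zero_mem' := by simpa using zsmul_mem_gammaA'_codeSet (C := C) 0 }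
  have hmultiple : ∀ y, 2 ^ a • y ∈ S := fun y => by
    rw [← natCast_zsmul, Nat.cast_pow, Nat.cast_ofNat]
    exact zsmul_mem_gammaA'_codeSet y
  exact ⟨{ S with neg_mem' := S.neg_mem_of_nsmul_mem (Nat.two_pow_pos a) hmultiple },
    by rw [hexpr]; rfl⟩

/-- If a linear code `C` over `𝒰_a` can be expressed as
`C = C₀ + u C₁ + ... + u^{a-1} C_{a-1}` for nested binary codes closed under Schur
product (with `C_a = (ZMod 2)^n`), then `Γ_{A'} = Φ(C) + 2^a ℤ^n` is an additive
subgroup of `ℤ^n`, i.e. a lattice. -/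
theorem gammaA'_lattice_of_schur {n a : ℕ} (M : Submodule (Ua a) (Fin n → Ua a))
    (C : ℕ → Submodule (ZMod 2) (Fin n → ZMod 2))
    (hmono : ∀ i < a, C i ≤ C (i + 1)) (htop : C a = ⊤)
    (hschur : ∀ i < a, ∀ c ∈ C i, ∀ d ∈ C i, c * d ∈ C (i + 1))
    (hexpr : (M : Set (Fin n → Ua a)) = CodeSet a C) :
    ∃ G : AddSubgroup (Fin n → ℤ),
      (G : Set (Fin n → ℤ)) = GammaA' (M : Set (Fin n → Ua a)) :=
  gammaA'_lattice_of_schur_general M C hschur hexpr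
end
end
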